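/- For every k ∈ ℕ, p ≥ 1, β > 0, σ ∈ (1/2,1) and fields h ∈ ℝ^p, the quenched free energy of the hierarchical Hopfield model is uniformly bounded: f_k(β,h,σ,p) ≤ f_0(β,h,σ,p) + (βp/2)·2^{1−2σ}/(1 − 2^{1−2σ}), where f_0(β,h,σ,p) = log 2 + E_ξ[log cosh(β Σ_{μ=1}^p h_μ ξ^μ)] with E_ξ the uniform average over ξ ∈ {−1,+1}^p. -/

import Mathlib

/-!
Let `A_k(S, ξ) = -β H_k(S, ξ) + β Σ_μ h_μ m_μ` with overlaps `m_μ = Σ_i ξ^μ_i S_i`, and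
`Z_k(ξ) = Σ_S exp A_k(S, ξ)`. The recursion for `H_{k+1}` writes `A_{k+1}` as the sum of the
exponents of the two halves plus `β Σ_μ m_μ² / (2 · 2^{2σ(k+1)})`; since `|m_μ| ≤ 2^{k+1}`, this
coupling is at most `(βp/2) 2^{k+1} r^{k+1}` with `r = 2^{1-2σ}`. So `log Z_{k+1}(ξ)` exceeds the
sum of the log partition functions of the two halves of `ξ` by at most that much; both halves of a
uniform pattern are uniform, hence `f_{k+1} ≤ f_k + (βp/2) r^{k+1}`. For `σ > 1/2` we have `r < 1`
and the geometric series gives the bound, with `f_0` read off from `Z_0 = 2 cosh(β Σ_μ h_μ ξ^μ)`.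
-/

open Real Filter

noncomputable def spin (b : Bool) : ℝ := if b then 1 else -1

def finLeft {k : ℕ} (i : Fin (2 ^ k)) : Fin (2 ^ (k + 1)) :=
  ⟨i.1, lt_of_lt_of_le i.2 (Nat.pow_le_pow_right (by norm_num) (Nat.le_succ k))⟩

def finRight {k : ℕ} (i : Fin (2 ^ k)) : Fin (2 ^ (k + 1)) :=
  ⟨i.1 + 2 ^ k, by
    have h2 : 2 ^ (k + 1) = 2 ^ k + 2 ^ k := by rw [pow_succ]; ring
    have := i.2; omega⟩

/-- The hierarchical Hopfield model Hamiltonian, defined recursively; `p` is the number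
of patterns, `ξ` the pattern assignment, and the double sum over sites includes `i = j`. -/
noncomputable def hopH (σ : ℝ) (p : ℕ) :
    (k : ℕ) → (Fin (2 ^ k) → Bool) → (Fin p → Fin (2 ^ k) → Bool) → ℝ
  | 0, _, _ => 0
  | (k + 1), S, ξ =>
      hopH σ p k (fun i => S (finLeft i)) (fun μ i => ξ μ (finLeft i)) +
        hopH σ p k (fun i => S (finRight i)) (fun μ i => ξ μ (finRight i)) -
        1 / (2 * (2 : ℝ) ^ (2 * σ * ((k : ℝ) + 1))) *
          ∑ μ : Fin p, ∑ i : Fin (2 ^ (k + 1)), ∑ j : Fin (2 ^ (k + 1)),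
            spin (ξ μ i) * spin (ξ μ j) * spin (S i) * spin (S j)

/-- The quenched free energy of the hierarchical Hopfield model with external fields `h`:
the uniform average over the `2^(p·2^k)` pattern assignments of the log partition function,
divided by the number `2^k` of spins. -/
noncomputable def hopF (β σ : ℝ) (p : ℕ) (h : Fin p → ℝ) (k : ℕ) : ℝ :=
  ((2 : ℝ) ^ k)⁻¹ * (((2 : ℝ) ^ (p * 2 ^ k))⁻¹ *
    ∑ ξ : Fin p → Fin (2 ^ k) → Bool,
      Real.log (∑ S : Fin (2 ^ k) → Bool,
        Real.exp (-β * hopH σ p k S ξ + β * ∑ μ, h μ * ∑ i, spin (ξ μ i) * spin (S i))))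

open Finset
open scoped BigOperators

def finHalves (k : ℕ) : Fin (2 ^ k) ⊕ Fin (2 ^ k) ≃ Fin (2 ^ (k + 1)) :=
  finSumFinEquiv.trans (finCongr (Nat.two_pow_succ k).symm)

@[simp] lemma finHalves_inl {k : ℕ} (i : Fin (2 ^ k)) : finHalves k (.inl i) = finLeft i := rfl

@[simp] lemma finHalves_inr {k : ℕ} (i : Fin (2 ^ k)) : finHalves k (.inr i) = finRight i :=
  Fin.ext (Nat.add_comm _ _)

lemma sum_fin_two_pow_succ {k : ℕ} {M : Type*} [AddCommMonoid M] (g : Fin (2 ^ (k + 1)) → M) :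
    ∑ j, g j = ∑ i, g (finLeft i) + ∑ i, g (finRight i) := by
  rw [← (finHalves k).sum_comp, Fintype.sum_sum_type]
  simp

def funHalves (k : ℕ) (X : Type*) :
    (Fin (2 ^ (k + 1)) → X) ≃ (Fin (2 ^ k) → X) × (Fin (2 ^ k) → X) :=
  ((finHalves k).arrowCongr (Equiv.refl X)).symm.trans (Equiv.sumArrowEquivProdArrow _ _ _)

lemma funHalves_apply {k : ℕ} {X : Type*} (S : Fin (2 ^ (k + 1)) → X) :
    funHalves k X S = (fun i => S (finLeft i), fun i => S (finRight i)) := by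
  ext i <;> simp [funHalves]

def piFunHalves (k : ℕ) (ι X : Type*) :
    (ι → Fin (2 ^ (k + 1)) → X) ≃ (ι → Fin (2 ^ k) → X) × (ι → Fin (2 ^ k) → X) :=
  (Equiv.piCongrRight fun _ => funHalves k X).trans (Equiv.arrowProdEquivProdArrow _ _ _)

lemma piFunHalves_apply {k : ℕ} {ι X : Type*} (ξ : ι → Fin (2 ^ (k + 1)) → X) :
    piFunHalves k ι X ξ = (fun μ i => ξ μ (finLeft i), fun μ i => ξ μ (finRight i)) := by
  ext μ i <;> simp [piFunHalves, funHalves_apply]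

lemma card_patterns (k p : ℕ) : Fintype.card (Fin p → Fin (2 ^ k) → Bool) = 2 ^ (p * 2 ^ k) := by
  simp [← pow_mul, mul_comm]

lemma sum_mul_sum_halves {k : ℕ} {X R : Type*} [Fintype X] [CommSemiring R]
    (f g : (Fin (2 ^ k) → X) → R) :
    ∑ S : Fin (2 ^ (k + 1)) → X, f (fun i => S (finLeft i)) * g (fun i => S (finRight i)) =
      (∑ S, f S) * ∑ S, g S := by
  rw [sum_mul_sum, ← Fintype.sum_prod_type', ← (funHalves k X).sum_comp]
  simp only [funHalves_apply]

lemma expect_add_halves {k : ℕ} {ι X : Type*} [Fintype ι] [DecidableEq ι] [Fintype X] [Nonempty X]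
    (g : (ι → Fin (2 ^ k) → X) → ℝ) :
    𝔼 ξ : ι → Fin (2 ^ (k + 1)) → X,
        (g (fun μ i => ξ μ (finLeft i)) + g (fun μ i => ξ μ (finRight i))) =
      2 * 𝔼 ξ, g ξ := by
  rw [Fintype.expect_equiv (piFunHalves k ι X) _ (fun P => g P.1 + g P.2)
    (fun ξ => by rw [piFunHalves_apply]), ← univ_product_univ, expect_product]
  simp [expect_add_distrib, two_mul]

lemma two_pow_sq_div_rpow (σ : ℝ) (n : ℕ) :
    ((2 : ℝ) ^ n) ^ 2 / (2 : ℝ) ^ (2 * σ * n) = 2 ^ n * ((2 : ℝ) ^ (1 - 2 * σ)) ^ n := by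
  rw [rpow_mul_natCast zero_le_two, rpow_sub two_pos, rpow_one, div_pow, sq, mul_div_assoc]

lemma le_add_geom_of_le_succ {a : ℕ → ℝ} {c r : ℝ} (hc : 0 ≤ c) (hr₀ : 0 ≤ r) (hr₁ : r < 1)
    (ha : ∀ n, a (n + 1) ≤ a n + c * r ^ (n + 1)) (n : ℕ) : a n ≤ a 0 + c * (r / (1 - r)) := by
  have htel : a n ≤ a 0 + c * ∑ i ∈ Ico 1 (n + 1), r ^ i := by
    induction n with
    | zero => simp
    | succ n ih =>
      rw [sum_Ico_succ_top (by omega), mul_add]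
      linarith [ha n]
  have hgeom := geom_sum_Ico_le_of_lt_one (m := 1) (n := n + 1) hr₀ hr₁
  rw [pow_one] at hgeom
  linarith [mul_le_mul_of_nonneg_left hgeom hc]

lemma abs_spin (b : Bool) : |spin b| = 1 := by
  cases b <;> simp [spin]

noncomputable def overlap {n p : ℕ} (ξ : Fin p → Fin n → Bool) (S : Fin n → Bool) (μ : Fin p) :
    ℝ :=
  ∑ i, spin (ξ μ i) * spin (S i)

lemma abs_overlap_le {n p : ℕ} (ξ : Fin p → Fin n → Bool) (S : Fin n → Bool) (μ : Fin p) :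
    |overlap ξ S μ| ≤ n :=
  calc |overlap ξ S μ| ≤ ∑ i, |spin (ξ μ i) * spin (S i)| := abs_sum_le_sum_abs _ _
    _ = n := by simp [abs_mul, abs_spin]

lemma sum_overlap_sq_le {n p : ℕ} (ξ : Fin p → Fin n → Bool) (S : Fin n → Bool) :
    ∑ μ, overlap ξ S μ ^ 2 ≤ p * (n : ℝ) ^ 2 :=
  calc ∑ μ, overlap ξ S μ ^ 2 ≤ ∑ _μ : Fin p, (n : ℝ) ^ 2 :=
        sum_le_sum fun μ _ => sq_le_sq.2 ((abs_overlap_le ξ S μ).trans (le_abs_self _))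
    _ = p * (n : ℝ) ^ 2 := by simp

lemma overlap_succ {k p : ℕ} (ξ : Fin p → Fin (2 ^ (k + 1)) → Bool) (S : Fin (2 ^ (k + 1)) → Bool)
    (μ : Fin p) :
    overlap ξ S μ = overlap (fun μ i => ξ μ (finLeft i)) (fun i => S (finLeft i)) μ +
      overlap (fun μ i => ξ μ (finRight i)) (fun i => S (finRight i)) μ :=
  sum_fin_two_pow_succ _

lemma hopH_succ (σ : ℝ) {k p : ℕ} (S : Fin (2 ^ (k + 1)) → Bool)
    (ξ : Fin p → Fin (2 ^ (k + 1)) → Bool) :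
    hopH σ p (k + 1) S ξ =
      hopH σ p k (fun i => S (finLeft i)) (fun μ i => ξ μ (finLeft i)) +
        hopH σ p k (fun i => S (finRight i)) (fun μ i => ξ μ (finRight i)) -
        (2 * (2 : ℝ) ^ (2 * σ * ((k : ℝ) + 1)))⁻¹ * ∑ μ, overlap ξ S μ ^ 2 := by
  rw [hopH, one_div]
  congr 2
  refine sum_congr rfl fun μ _ => ?_
  rw [overlap, sq, sum_mul_sum]
  exact sum_congr rfl fun i _ => sum_congr rfl fun j _ => by ring

noncomputable def boltzmannExponent (β σ : ℝ) {k p : ℕ} (h : Fin p → ℝ) (S : Fin (2 ^ k) → Bool)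
    (ξ : Fin p → Fin (2 ^ k) → Bool) : ℝ :=
  -β * hopH σ p k S ξ + β * ∑ μ, h μ * overlap ξ S μ

noncomputable def partitionFn (β σ : ℝ) {k p : ℕ} (h : Fin p → ℝ)
    (ξ : Fin p → Fin (2 ^ k) → Bool) : ℝ :=
  ∑ S, exp (boltzmannExponent β σ h S ξ)

lemma partitionFn_pos (β σ : ℝ) {k p : ℕ} (h : Fin p → ℝ) (ξ : Fin p → Fin (2 ^ k) → Bool) :
    0 < partitionFn β σ h ξ :=
  sum_pos (fun _ _ => exp_pos _) univ_nonempty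

lemma hopF_eq_expect (β σ : ℝ) (p : ℕ) (h : Fin p → ℝ) (k : ℕ) :
    hopF β σ p h k =
      ((2 : ℝ) ^ k)⁻¹ * 𝔼 ξ : Fin p → Fin (2 ^ k) → Bool, log (partitionFn β σ h ξ) := by
  rw [Fintype.expect_eq_sum_div_card, card_patterns, hopF, div_eq_inv_mul]
  push_cast
  rfl

lemma boltzmannExponent_succ (β σ : ℝ) {k p : ℕ} (h : Fin p → ℝ) (S : Fin (2 ^ (k + 1)) → Bool)
    (ξ : Fin p → Fin (2 ^ (k + 1)) → Bool) :
    boltzmannExponent β σ h S ξ =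
      boltzmannExponent β σ h (fun i => S (finLeft i)) (fun μ i => ξ μ (finLeft i)) +
        boltzmannExponent β σ h (fun i => S (finRight i)) (fun μ i => ξ μ (finRight i)) +
        β * ((2 * (2 : ℝ) ^ (2 * σ * ((k : ℝ) + 1)))⁻¹ * ∑ μ, overlap ξ S μ ^ 2) := by
  have hfield : ∑ μ, h μ * overlap ξ S μ =
      ∑ μ, h μ * overlap (fun μ i => ξ μ (finLeft i)) (fun i => S (finLeft i)) μ +
        ∑ μ, h μ * overlap (fun μ i => ξ μ (finRight i)) (fun i => S (finRight i)) μ := by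
    simp only [overlap_succ ξ S, mul_add, sum_add_distrib]
  rw [boltzmannExponent, hopH_succ, hfield, boltzmannExponent, boltzmannExponent]
  ring

lemma coupling_mul_sum_overlap_sq_le (σ : ℝ) {k p : ℕ} (ξ : Fin p → Fin (2 ^ (k + 1)) → Bool)
    (S : Fin (2 ^ (k + 1)) → Bool) :
    (2 * (2 : ℝ) ^ (2 * σ * ((k : ℝ) + 1)))⁻¹ * ∑ μ, overlap ξ S μ ^ 2 ≤
      p / 2 * (2 ^ (k + 1) * ((2 : ℝ) ^ (1 - 2 * σ)) ^ (k + 1)) := by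
  have hq : 0 < (2 : ℝ) ^ (2 * σ * ((k : ℝ) + 1)) := rpow_pos_of_pos two_pos _
  calc (2 * (2 : ℝ) ^ (2 * σ * ((k : ℝ) + 1)))⁻¹ * ∑ μ, overlap ξ S μ ^ 2
      ≤ (2 * (2 : ℝ) ^ (2 * σ * ((k : ℝ) + 1)))⁻¹ * (p * ((2 ^ (k + 1) : ℕ) : ℝ) ^ 2) := by
        gcongr
        exact sum_overlap_sq_le ξ S
    _ = p / 2 * (((2 : ℝ) ^ (k + 1)) ^ 2 / (2 : ℝ) ^ (2 * σ * ((k + 1 : ℕ) : ℝ))) := by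
        push_cast
        field_simp
    _ = p / 2 * (2 ^ (k + 1) * ((2 : ℝ) ^ (1 - 2 * σ)) ^ (k + 1)) := by
        rw [two_pow_sq_div_rpow]

lemma partitionFn_succ_le {β : ℝ} (hβ : 0 ≤ β) (σ : ℝ) {k p : ℕ} (h : Fin p → ℝ)
    (ξ : Fin p → Fin (2 ^ (k + 1)) → Bool) :
    partitionFn β σ h ξ ≤
      exp (β * p / 2 * (2 ^ (k + 1) * ((2 : ℝ) ^ (1 - 2 * σ)) ^ (k + 1))) *
        (partitionFn β σ h (fun μ i => ξ μ (finLeft i)) *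
          partitionFn β σ h (fun μ i => ξ μ (finRight i))) := by
  rw [partitionFn, partitionFn, partitionFn, ← sum_mul_sum_halves, mul_sum]
  refine sum_le_sum fun S _ => ?_
  rw [← exp_add, ← exp_add, boltzmannExponent_succ]
  have := mul_le_mul_of_nonneg_left (coupling_mul_sum_overlap_sq_le σ ξ S) hβ
  exact exp_le_exp.2 (by linarith)

lemma log_partitionFn_succ_le {β : ℝ} (hβ : 0 ≤ β) (σ : ℝ) {k p : ℕ} (h : Fin p → ℝ)
    (ξ : Fin p → Fin (2 ^ (k + 1)) → Bool) :
    log (partitionFn β σ h ξ) ≤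
      β * p / 2 * (2 ^ (k + 1) * ((2 : ℝ) ^ (1 - 2 * σ)) ^ (k + 1)) +
        (log (partitionFn β σ h (fun μ i => ξ μ (finLeft i))) +
          log (partitionFn β σ h (fun μ i => ξ μ (finRight i)))) := by
  have hL := partitionFn_pos β σ h (fun μ i => ξ μ (finLeft i))
  have hR := partitionFn_pos β σ h (fun μ i => ξ μ (finRight i))
  rw [← log_mul hL.ne' hR.ne', ← log_exp (β * p / 2 * _),
    ← log_mul (exp_pos _).ne' (mul_pos hL hR).ne']
  exact log_le_log (partitionFn_pos β σ h ξ) (partitionFn_succ_le hβ σ h ξ)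

lemma hopF_succ_le {β : ℝ} (hβ : 0 ≤ β) (σ : ℝ) (p : ℕ) (h : Fin p → ℝ) (k : ℕ) :
    hopF β σ p h (k + 1) ≤ hopF β σ p h k + β * p / 2 * ((2 : ℝ) ^ (1 - 2 * σ)) ^ (k + 1) := by
  set r := (2 : ℝ) ^ (1 - 2 * σ)
  rw [hopF_eq_expect, hopF_eq_expect]
  calc ((2 : ℝ) ^ (k + 1))⁻¹ * 𝔼 ξ : Fin p → Fin (2 ^ (k + 1)) → Bool, log (partitionFn β σ h ξ)
      ≤ ((2 : ℝ) ^ (k + 1))⁻¹ * 𝔼 ξ : Fin p → Fin (2 ^ (k + 1)) → Bool,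
          (β * p / 2 * (2 ^ (k + 1) * r ^ (k + 1)) +
            (log (partitionFn β σ h (fun μ i => ξ μ (finLeft i))) +
              log (partitionFn β σ h (fun μ i => ξ μ (finRight i))))) := by
        gcongr with ξ
        exact log_partitionFn_succ_le hβ σ h ξ
    _ = ((2 : ℝ) ^ (k + 1))⁻¹ * (β * p / 2 * (2 ^ (k + 1) * r ^ (k + 1)) +
          2 * 𝔼 ξ : Fin p → Fin (2 ^ k) → Bool, log (partitionFn β σ h ξ)) := by
        rw [expect_add_distrib, Fintype.expect_const,
          expect_add_halves fun ξ => log (partitionFn β σ h ξ)]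
    _ = _ := by
        rw [pow_succ]
        field_simp
        ring

lemma boltzmannExponent_zero (β σ : ℝ) {p : ℕ} (h : Fin p → ℝ) (S : Fin (2 ^ 0) → Bool)
    (ξ : Fin p → Fin (2 ^ 0) → Bool) :
    boltzmannExponent β σ h S ξ = β * (∑ μ, h μ * spin (ξ μ 0)) * spin (S 0) := by
  simp [boltzmannExponent, hopH, overlap, mul_sum, sum_mul, mul_assoc]

lemma partitionFn_zero (β σ : ℝ) {p : ℕ} (h : Fin p → ℝ) (ξ : Fin p → Fin (2 ^ 0) → Bool) :
    partitionFn β σ h ξ = 2 * cosh (β * ∑ μ, h μ * spin (ξ μ 0)) := by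
  have : Unique (Fin (2 ^ 0)) := inferInstanceAs (Unique (Fin 1))
  rw [partitionFn, ← (Equiv.funUnique (Fin (2 ^ 0)) Bool).symm.sum_comp, Fintype.sum_bool,
    cosh_eq, mul_div_cancel₀ _ two_ne_zero]
  simp [boltzmannExponent_zero, spin]

lemma hopF_zero (β σ : ℝ) (p : ℕ) (h : Fin p → ℝ) :
    hopF β σ p h 0 = log 2 + ((2 : ℝ) ^ p)⁻¹ *
      ∑ ξ : Fin p → Bool, log (cosh (β * ∑ μ, h μ * spin (ξ μ))) := by
  have : Unique (Fin (2 ^ 0)) := inferInstanceAs (Unique (Fin 1))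
  rw [hopF_eq_expect, pow_zero, inv_one, one_mul]
  simp only [partitionFn_zero]
  rw [Fintype.expect_equiv
    (Equiv.piCongrRight fun _ : Fin p => Equiv.funUnique (Fin (2 ^ 0)) Bool)
    (fun ξ => log (2 * cosh (β * ∑ μ, h μ * spin (ξ μ 0))))
    (fun η => log (2 * cosh (β * ∑ μ, h μ * spin (η μ))))
    fun _ => by simp [Unique.default_eq (0 : Fin (2 ^ 0))]]
  simp only [log_mul two_ne_zero (cosh_pos _).ne']
  rw [expect_add_distrib, Fintype.expect_const, Fintype.expect_eq_sum_div_card, Fintype.card_fun,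
    Fintype.card_bool, Fintype.card_fin]
  push_cast
  rw [div_eq_inv_mul]

theorem hopfield_free_energy_bounded_general (k p : ℕ) (β σ : ℝ) (h : Fin p → ℝ)
    (hβ : 0 < β) (hσ : σ ∈ Set.Ioo (1 / 2 : ℝ) 1) :
    hopF β σ p h k ≤
      (Real.log 2 + ((2 : ℝ) ^ p)⁻¹ *
          ∑ ξ : Fin p → Bool, Real.log (Real.cosh (β * ∑ μ, h μ * spin (ξ μ)))) +
        β * p / 2 * ((2 : ℝ) ^ (1 - 2 * σ) / (1 - (2 : ℝ) ^ (1 - 2 * σ))) := by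
  have hr₁ : (2 : ℝ) ^ (1 - 2 * σ) < 1 :=
    rpow_lt_one_of_one_lt_of_neg one_lt_two (by linarith [hσ.1])
  rw [← hopF_zero β σ p h]
  exact le_add_geom_of_le_succ (by positivity) (rpow_nonneg zero_le_two _) hr₁
    (hopF_succ_le hβ.le σ p h) k

/-- uniform bound for the quenched free energy of the HHM, where
`f_0 = log 2 + E_ξ[log cosh(β Σ_μ h_μ ξ^μ)]`. -/
theorem hopfield_free_energy_bounded (k p : ℕ) (hp : 1 ≤ p) (β σ : ℝ) (h : Fin p → ℝ)
    (hβ : 0 < β) (hσ : σ ∈ Set.Ioo (1 / 2 : ℝ) 1) :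
    hopF β σ p h k ≤
      (Real.log 2 + ((2 : ℝ) ^ p)⁻¹ *
          ∑ ξ : Fin p → Bool, Real.log (Real.cosh (β * ∑ μ, h μ * spin (ξ μ)))) +
        β * p / 2 * ((2 : ℝ) ^ (1 - 2 * σ) / (1 - (2 : ℝ) ^ (1 - 2 * σ))) :=
  hopfield_free_energy_bounded_general k p β σ h hβ hσ
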